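/- Let n > 12 with 3 | n. For every μ ∈ Φ3^n with t(μ) ≡ 0 (mod 3) and μ ∉ ⟨C,J⟩(4,1) ∪ ⟨J⟩(2,2) ∪ ⟨J⟩ρ, one has D^(n)(μ) > D^(n)((4,1)) > D^(n)((2,2)) > 1. -/

import Mathlib

/-!
Put `s k = sin (π k / n)` and `r = n - λ₁ - λ₂`. Since `s (n - k) = s k`, the numerator of
`D⁽ⁿ⁾(λ)` is `s λ₁ · s λ₂ · s r`, symmetric in the triple `(λ₁, λ₂, r)`, which `J` rotates.
When `3 ∣ n` and `3 ∣ t(λ)` the three entries are congruent mod 3, so two of them add up to less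
than 6 only if they are `{1, 1}`, `{2, 2}` or `{1, 4}`, that is, only on the excluded orbits.
For the remaining triples, sorted as `a ≤ b ≤ c`, each of `s a, s b, s c` dominates the matching
factor of `s 1 · s 4 · s 5`, because `s k` increases with `min k (n - k)`; the one exception
`(3, 3, n - 6)` follows from `s 1 · s 5 = s 3 ^ 2 - s 2 ^ 2`. The other two inequalities reduce
to `s 2 ^ 2 < s 1 · s 5`, which amounts to `cos (4π / n) > 1 / 2`, and to the monotonicity of `s`.
-/

open scoped Classical
noncomputable section

/-- The set `Φ₃ⁿ` of SU(3) weights at height `n`. -/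
def Phi3 (n : ℕ) : Finset (ℤ × ℤ) :=
  (Finset.Icc ((1 : ℤ), (1 : ℤ)) ((n : ℤ), (n : ℤ))).filter (fun l => l.1 + l.2 ≤ (n : ℤ) - 1)

/-- Triality `t(λ) = λ₁ + 2λ₂`. -/
def tri (l : ℤ × ℤ) : ℤ := l.1 + 2 * l.2

/-- The order-3 simple current `Jλ = (n−λ₁−λ₂, λ₁)`. -/
def Jv (n : ℕ) (l : ℤ × ℤ) : ℤ × ℤ := ((n : ℤ) - l.1 - l.2, l.1)

/-- Conjugation `Cλ = (λ₂, λ₁)`. -/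
def Cv (l : ℤ × ℤ) : ℤ × ℤ := (l.2, l.1)

/-- The orbit `⟨J⟩λ = {λ, Jλ, J²λ}`. -/
def orbJ (n : ℕ) (l : ℤ × ℤ) : Finset (ℤ × ℤ) := {l, Jv n l, Jv n (Jv n l)}

/-- The orbit `⟨C,J⟩λ = {λ, Jλ, J²λ, Cλ, JCλ, J²Cλ}`. -/
def orbCJ (n : ℕ) (l : ℤ × ℤ) : Finset (ℤ × ℤ) := orbJ n l ∪ orbJ n (Cv l)

/-- The SU(3) quantum dimension `D⁽ⁿ⁾(λ)`. -/
def qdim (n : ℕ) (l : ℤ × ℤ) : ℝ :=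
  (Real.sin (Real.pi * (l.1 : ℝ) / n) * Real.sin (Real.pi * (l.2 : ℝ) / n) *
      Real.sin (Real.pi * ((l.1 : ℝ) + (l.2 : ℝ)) / n)) /
    (Real.sin (Real.pi / n) ^ 2 * Real.sin (2 * Real.pi / n))

open Real

theorem sin_le_sin_of_le_of_add_le {u v : ℝ} (hu : 0 ≤ u) (huv : u ≤ v) (hsum : u + v ≤ π) :
    sin u ≤ sin v := by
  have hs : 0 ≤ sin ((v - u) / 2) := sin_nonneg_of_nonneg_of_le_pi (by linarith) (by linarith)
  have hc : 0 ≤ cos ((v + u) / 2) := cos_nonneg_of_mem_Icc ⟨by linarith, by linarith⟩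
  nlinarith [sin_sub_sin v u, mul_nonneg hs hc]

theorem sin_lt_sin_of_lt_of_add_lt {u v : ℝ} (hu : 0 ≤ u) (huv : u < v) (hsum : u + v < π) :
    sin u < sin v := by
  have hs : 0 < sin ((v - u) / 2) := sin_pos_of_pos_of_lt_pi (by linarith) (by linarith)
  have hc : 0 < cos ((v + u) / 2) := cos_pos_of_mem_Ioo ⟨by linarith, by linarith⟩
  nlinarith [sin_sub_sin v u, mul_pos hs hc]

theorem sin_sub_mul_sin_add (u v : ℝ) : sin (u - v) * sin (u + v) = sin u ^ 2 - sin v ^ 2 := by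
  rw [sin_sub, sin_add]
  linear_combination sin u ^ 2 * sin_sq_add_cos_sq v - sin v ^ 2 * sin_sq_add_cos_sq u

theorem sin_two_mul_sq_lt_sin_mul_sin_five_mul {x : ℝ} (hx : 0 < x) (hx12 : 12 * x < π) :
    sin (2 * x) ^ 2 < sin x * sin (5 * x) := by
  have key : sin x * sin (5 * x) - sin (2 * x) ^ 2 = sin x ^ 2 * (2 * cos (4 * x) - 1) := by
    rw [show 5 * x = 2 * (2 * x) + x by ring, show 4 * x = 2 * (2 * x) by ring, sin_add,
      sin_two_mul (2 * x), cos_two_mul (2 * x), sin_two_mul x, cos_two_mul x]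
    ring
  have hcos : 1 / 2 < cos (4 * x) := by
    rw [← cos_pi_div_three]
    exact cos_lt_cos_of_nonneg_of_le_pi_div_two (by linarith) (by linarith) (by linarith)
  have hsin : 0 < sin x := sin_pos_of_pos_of_lt_pi hx (by linarith)
  nlinarith [mul_pos (pow_pos hsin 2) (by linarith : 0 < 2 * cos (4 * x) - 1)]

def sinPiDiv (n : ℕ) (k : ℤ) : ℝ := sin (π * k / n)

section sinPiDiv

variable {n : ℕ}

theorem sinPiDiv_pos {k : ℤ} (hk : 0 < k) (hkn : k < n) : 0 < sinPiDiv n k := by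
  have hn : (0 : ℝ) < n := by exact_mod_cast (show (0 : ℤ) < n by omega)
  have hk' : (0 : ℝ) < k := by exact_mod_cast hk
  refine sin_pos_of_pos_of_lt_pi (by positivity) ?_
  rw [div_lt_iff₀ hn]
  gcongr
  exact_mod_cast hkn

theorem sinPiDiv_le_sinPiDiv {m k : ℤ} (hm : 0 ≤ m) (hmk : m ≤ k) (hmkn : m + k ≤ n) :
    sinPiDiv n m ≤ sinPiDiv n k := by
  have hm' : (0 : ℝ) ≤ m := by exact_mod_cast hm
  refine sin_le_sin_of_le_of_add_le (by positivity) ?_ ?_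
  · gcongr
  · rw [← add_div, ← mul_add]
    refine div_le_of_le_mul₀ (by positivity) pi_pos.le ?_
    gcongr
    exact_mod_cast hmkn

theorem sinPiDiv_lt_sinPiDiv {m k : ℤ} (hm : 0 ≤ m) (hmk : m < k) (hmkn : m + k < n) :
    sinPiDiv n m < sinPiDiv n k := by
  have hn : (0 : ℝ) < n := by exact_mod_cast (show (0 : ℤ) < n by omega)
  have hm' : (0 : ℝ) ≤ m := by exact_mod_cast hm
  refine sin_lt_sin_of_lt_of_add_lt (by positivity) ?_ ?_
  · gcongr
  · rw [← add_div, ← mul_add, div_lt_iff₀ hn]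
    gcongr
    exact_mod_cast hmkn

theorem sinPiDiv_natCast_sub (k : ℤ) : sinPiDiv n (n - k) = sinPiDiv n k := by
  rcases eq_or_ne n 0 with rfl | hn
  · simp [sinPiDiv]
  · rw [sinPiDiv, sinPiDiv, ← sin_pi_sub]
    congr 1
    push_cast
    field_simp
    ring

theorem sinPiDiv_one_mul_sinPiDiv_five_lt (hn : 2 < n) :
    sinPiDiv n 1 * sinPiDiv n 5 < sinPiDiv n 3 ^ 2 := by
  have h2 : 0 < sinPiDiv n 2 := sinPiDiv_pos (by norm_num) (by omega)
  have key := sin_sub_mul_sin_add (π * 3 / n) (π * 2 / n)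
  rw [show π * 3 / n - π * 2 / n = π * (1 : ℤ) / n by push_cast; ring,
    show π * 3 / n + π * 2 / n = π * (5 : ℤ) / n by push_cast; ring] at key
  simp only [sinPiDiv] at h2 ⊢
  push_cast at h2 key ⊢
  nlinarith [pow_pos h2 2]

theorem sinPiDiv_two_sq_lt (hn : 12 < n) :
    sinPiDiv n 2 ^ 2 < sinPiDiv n 1 * sinPiDiv n 5 := by
  have hn' : (12 : ℝ) < n := by exact_mod_cast hn
  have h := sin_two_mul_sq_lt_sin_mul_sin_five_mul (x := π / n) (by positivity) (by
    rw [mul_div_assoc', div_lt_iff₀ (by positivity)]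
    nlinarith [pi_pos])
  simp only [sinPiDiv]
  push_cast
  convert h using 3 <;> ring

theorem sinPiDiv_one_four_five_lt_of_sorted (hn : 12 < n) {a b c : ℤ} (ha : 1 ≤ a) (hab : a ≤ b)
    (hbc : b ≤ c) (hsum : a + b + c = n) (h6 : 6 ≤ a + b) :
    sinPiDiv n 1 * sinPiDiv n 4 * sinPiDiv n 5 < sinPiDiv n a * sinPiDiv n b * sinPiDiv n c := by
  have h5c : sinPiDiv n 5 ≤ sinPiDiv n c := sinPiDiv_le_sinPiDiv (by norm_num) (by omega) (by omega)
  have h4 : 0 < sinPiDiv n 4 := sinPiDiv_pos (by norm_num) (by omega)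
  by_cases h33 : a = 3 ∧ b = 3
  · obtain ⟨rfl, rfl⟩ := h33
    have h4c : sinPiDiv n 4 ≤ sinPiDiv n c :=
      sinPiDiv_le_sinPiDiv (by norm_num) (by omega) (by omega)
    calc sinPiDiv n 1 * sinPiDiv n 4 * sinPiDiv n 5
        = sinPiDiv n 1 * sinPiDiv n 5 * sinPiDiv n 4 := by ring
      _ < sinPiDiv n 3 ^ 2 * sinPiDiv n c :=
        mul_lt_mul (sinPiDiv_one_mul_sinPiDiv_five_lt (by omega)) h4c h4 (by positivity)
      _ = _ := by ring
  have h14 : sinPiDiv n 1 * sinPiDiv n 4 < sinPiDiv n a * sinPiDiv n b := by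
    rcases eq_or_lt_of_le ha with rfl | ha2
    · exact mul_lt_mul_of_pos_left (sinPiDiv_lt_sinPiDiv (by norm_num) (by omega) (by omega))
        (sinPiDiv_pos (by norm_num) (by omega))
    · exact mul_lt_mul (sinPiDiv_lt_sinPiDiv (by norm_num) ha2 (by omega))
        (sinPiDiv_le_sinPiDiv (by norm_num) (by omega) (by omega)) h4
        (sinPiDiv_pos (by omega) (by omega)).le
  exact mul_lt_mul h14 h5c (sinPiDiv_pos (by norm_num) (by omega))
    (mul_pos (sinPiDiv_pos (by omega) (by omega)) (sinPiDiv_pos (by omega) (by omega))).le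

theorem sinPiDiv_one_four_five_lt_of_le_of_le (hn : 12 < n) {a b c : ℤ} (ha : 1 ≤ a) (hb : 1 ≤ b)
    (hac : a ≤ c) (hbc : b ≤ c) (hsum : a + b + c = n) (h6 : 6 ≤ a + b) :
    sinPiDiv n 1 * sinPiDiv n 4 * sinPiDiv n 5 < sinPiDiv n a * sinPiDiv n b * sinPiDiv n c := by
  rcases le_total a b with hab | hba
  · exact sinPiDiv_one_four_five_lt_of_sorted hn ha hab hbc hsum h6
  · rw [mul_comm (sinPiDiv n a)]
    exact sinPiDiv_one_four_five_lt_of_sorted hn hb hba hac (by omega) (by omega)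

theorem sinPiDiv_one_four_five_lt (hn : 12 < n) {a b c : ℤ} (ha : 1 ≤ a) (hb : 1 ≤ b) (hc : 1 ≤ c)
    (hsum : a + b + c = n) (hab : 6 ≤ a + b) (hbc : 6 ≤ b + c) (hca : 6 ≤ c + a) :
    sinPiDiv n 1 * sinPiDiv n 4 * sinPiDiv n 5 < sinPiDiv n a * sinPiDiv n b * sinPiDiv n c := by
  by_cases hc_max : a ≤ c ∧ b ≤ c
  · exact sinPiDiv_one_four_five_lt_of_le_of_le hn ha hb hc_max.1 hc_max.2 hsum hab
  by_cases hb_max : a ≤ b ∧ c ≤ b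
  · exact (sinPiDiv_one_four_five_lt_of_le_of_le hn ha hc hb_max.1 hb_max.2 (by omega)
      (by omega)).trans_eq (by ring)
  · exact (sinPiDiv_one_four_five_lt_of_le_of_le (c := a) hn hb hc (by omega) (by omega)
      (by omega) hbc).trans_eq (by ring)

end sinPiDiv

theorem qdim_eq_sinPiDiv (n : ℕ) (l : ℤ × ℤ) :
    qdim n l = sinPiDiv n l.1 * sinPiDiv n l.2 * sinPiDiv n (l.1 + l.2) /
      (sinPiDiv n 1 ^ 2 * sinPiDiv n 2) := by
  simp only [qdim, sinPiDiv]
  push_cast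
  ring_nf

section qdim

variable {n : ℕ}

theorem sinPiDiv_one_sq_mul_sinPiDiv_two_pos (hn : 2 < n) : 0 < sinPiDiv n 1 ^ 2 * sinPiDiv n 2 :=
  mul_pos (pow_pos (sinPiDiv_pos one_pos (by omega)) 2) (sinPiDiv_pos two_pos (by omega))

theorem qdim_four_one_lt_qdim (hn : 12 < n) {p q : ℤ} (hp : 1 ≤ p) (hq : 1 ≤ q)
    (hpq : p + q ≤ n - 1) (h6pq : 6 ≤ p + q) (h6p : 6 ≤ n - p) (h6q : 6 ≤ n - q) :
    qdim n (4, 1) < qdim n (p, q) := by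
  rw [qdim_eq_sinPiDiv, qdim_eq_sinPiDiv, ← sinPiDiv_natCast_sub (p + q)]
  refine div_lt_div_of_pos_right ?_ (sinPiDiv_one_sq_mul_sinPiDiv_two_pos (by omega))
  have := sinPiDiv_one_four_five_lt (c := n - (p + q)) hn hp hq (by omega) (by ring) h6pq
    (by omega) (by omega)
  norm_num only
  linarith

theorem qdim_two_two_lt_qdim_four_one (hn : 12 < n) : qdim n (2, 2) < qdim n (4, 1) := by
  rw [qdim_eq_sinPiDiv, qdim_eq_sinPiDiv]
  refine div_lt_div_of_pos_right ?_ (sinPiDiv_one_sq_mul_sinPiDiv_two_pos (by omega))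
  norm_num only
  nlinarith [sinPiDiv_two_sq_lt hn, sinPiDiv_pos (n := n) (k := 4) (by norm_num) (by omega)]

theorem one_lt_qdim_two_two (hn : 6 < n) : 1 < qdim n (2, 2) := by
  have h1 : 0 < sinPiDiv n 1 := sinPiDiv_pos one_pos (by omega)
  have h12 : sinPiDiv n 1 < sinPiDiv n 2 :=
    sinPiDiv_lt_sinPiDiv (by norm_num) (by norm_num) (by omega)
  have h24 : sinPiDiv n 2 < sinPiDiv n 4 :=
    sinPiDiv_lt_sinPiDiv (by norm_num) (by norm_num) (by omega)
  rw [qdim_eq_sinPiDiv, one_lt_div (sinPiDiv_one_sq_mul_sinPiDiv_two_pos (by omega)), sq]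
  norm_num only
  exact mul_lt_mul'' (mul_self_lt_mul_self h1.le h12) h24 (by positivity) (h1.trans h12).le

end qdim

theorem mem_Phi3 {n : ℕ} {p q : ℤ} : (p, q) ∈ Phi3 n ↔ 1 ≤ p ∧ 1 ≤ q ∧ p + q ≤ n - 1 := by
  simp only [Phi3, Finset.mem_filter, Finset.mem_Icc, Prod.mk_le_mk]
  omega

theorem Jv_Jv_Jv (n : ℕ) (l : ℤ × ℤ) : Jv n (Jv n (Jv n l)) = l := by
  ext <;> simp only [Jv] <;> ring

theorem Jv_mem_orbJ {n : ℕ} {l m : ℤ × ℤ} (hm : m ∈ orbJ n l) : Jv n m ∈ orbJ n l := by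
  simp only [orbJ, Finset.mem_insert, Finset.mem_singleton] at hm ⊢
  rcases hm with rfl | rfl | rfl <;> simp [Jv_Jv_Jv]

theorem Jv_mem_orbJ_iff {n : ℕ} {l m : ℤ × ℤ} : Jv n m ∈ orbJ n l ↔ m ∈ orbJ n l :=
  ⟨fun h => Jv_Jv_Jv n m ▸ Jv_mem_orbJ (Jv_mem_orbJ h), Jv_mem_orbJ⟩

theorem Jv_mem_orbCJ_iff {n : ℕ} {l m : ℤ × ℤ} : Jv n m ∈ orbCJ n l ↔ m ∈ orbCJ n l := by
  simp only [orbCJ, Finset.mem_union, Jv_mem_orbJ_iff]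

theorem Jv_notMem_orbits {n : ℕ} {l : ℤ × ℤ}
    (hl : l ∉ orbCJ n (4, 1) ∪ orbJ n (2, 2) ∪ orbJ n (1, 1)) :
    Jv n l ∉ orbCJ n (4, 1) ∪ orbJ n (2, 2) ∪ orbJ n (1, 1) := by
  simpa only [Finset.mem_union, Jv_mem_orbCJ_iff, Jv_mem_orbJ_iff] using hl

theorem Jv_mem_Phi3 {n : ℕ} {l : ℤ × ℤ} (hl : l ∈ Phi3 n) : Jv n l ∈ Phi3 n := by
  obtain ⟨p, q⟩ := l
  rw [Jv, mem_Phi3] at *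
  omega

theorem three_dvd_tri_Jv {n : ℕ} (h3 : 3 ∣ n) {l : ℤ × ℤ} (hl : 3 ∣ tri l) : 3 ∣ tri (Jv n l) := by
  have h3' : (3 : ℤ) ∣ n := Int.natCast_dvd_natCast.2 h3
  simp only [tri, Jv] at hl ⊢
  omega

theorem six_le_add_of_notMem_orbits {n : ℕ} {l : ℤ × ℤ} (hl : l ∈ Phi3 n) (htri : 3 ∣ tri l)
    (horb : l ∉ orbCJ n (4, 1) ∪ orbJ n (2, 2) ∪ orbJ n (1, 1)) : 6 ≤ l.1 + l.2 := by
  obtain ⟨p, q⟩ := l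
  obtain ⟨hp, hq, -⟩ := mem_Phi3.1 hl
  simp only [tri] at htri
  by_contra! h6
  have : p ≤ 4 := by omega
  have : q ≤ 4 := by omega
  interval_cases p <;> interval_cases q <;> first | omega | simp [orbCJ, orbJ, Cv] at horb

theorem six_le_pairwise_add_of_notMem_orbits {n : ℕ} (h3 : 3 ∣ n) {p q : ℤ}
    (hmem : (p, q) ∈ Phi3 n) (htri : 3 ∣ tri (p, q))
    (horb : (p, q) ∉ orbCJ n (4, 1) ∪ orbJ n (2, 2) ∪ orbJ n (1, 1)) :
    6 ≤ p + q ∧ 6 ≤ n - p ∧ 6 ≤ n - q := by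
  have h6pq := six_le_add_of_notMem_orbits hmem htri horb
  have h6rp := six_le_add_of_notMem_orbits (Jv_mem_Phi3 hmem) (three_dvd_tri_Jv h3 htri)
    (Jv_notMem_orbits horb)
  have h6qr := six_le_add_of_notMem_orbits (Jv_mem_Phi3 (Jv_mem_Phi3 hmem))
    (three_dvd_tri_Jv h3 (three_dvd_tri_Jv h3 htri)) (Jv_notMem_orbits (Jv_notMem_orbits horb))
  simp only [Jv] at h6pq h6rp h6qr
  omega

theorem statement12 (n : ℕ) (hn : 12 < n) (h3 : 3 ∣ n) :
    ∀ mu ∈ Phi3 n, (3 : ℤ) ∣ tri mu →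
      mu ∉ orbCJ n (4, 1) ∪ orbJ n (2, 2) ∪ orbJ n (1, 1) →
        qdim n mu > qdim n (4, 1) ∧ qdim n (4, 1) > qdim n (2, 2) ∧ qdim n (2, 2) > 1 := by
  rintro ⟨p, q⟩ hmem htri horb
  obtain ⟨hp, hq, hpq⟩ := mem_Phi3.1 hmem
  obtain ⟨h6pq, h6p, h6q⟩ := six_le_pairwise_add_of_notMem_orbits h3 hmem htri horb
  exact ⟨qdim_four_one_lt_qdim hn hp hq hpq h6pq h6p h6q, qdim_two_two_lt_qdim_four_one hn,
    one_lt_qdim_two_two (by omega)⟩
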